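/- Let k ≥ 2 and set n = 4k+1. Then the bipyramid Q_n = conv(C_{n-1} × {0} ∪ {e_n, -e_n}) ⊂ ℝ^n is a centrally symmetric lattice polytope whose only interior lattice point is the origin and which satisfies ℓ_1(Q_n) > 2n. In particular, Q_9 satisfies ℓ_1(Q_9) = 494/15 > 18 = ℓ_1(C_9), so Q_9 is a counterexample to Wills' conjecture. -/

import Mathlib

open MeasureTheory Polynomial Pointwise

/-- The number of integer lattice points contained in a subset of `ℝ^n`. -/
noncomputable def latticePointCount {n : ℕ} (S : Set (Fin n → ℝ)) : ℕ :=
  {v : Fin n → ℤ | (fun i => (v i : ℝ)) ∈ S}.ncard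

/-- A lattice polytope in `ℝ^n`: the convex hull of finitely many integer points. -/
def IsLatticePolytope {n : ℕ} (P : Set (Fin n → ℝ)) : Prop :=
  ∃ V : Finset (Fin n → ℤ),
    P = convexHull ℝ ((fun v : Fin n → ℤ => fun i => (v i : ℝ)) '' (V : Set (Fin n → ℤ)))

/-- `L` is the Ehrhart polynomial of `P`: for every positive integer `k` its value at `k`
is the number of lattice points of the dilate `kP`. -/
def IsEhrhartPoly {n : ℕ} (P : Set (Fin n → ℝ)) (L : Polynomial ℝ) : Prop :=
  ∀ k : ℕ, 0 < k → L.eval (k : ℝ) = latticePointCount ((k : ℝ) • P)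

/-- The bipyramid `Q_n = conv(C_{n-1} × {0} ∪ {e_n, -e_n})` over the cube
`C_{n-1} = [-1,1]^{n-1}`, sitting in `ℝ^n` (here `n ≥ 2`). -/
noncomputable def bipyramidQ (n : ℕ) (hn : 2 ≤ n) : Set (Fin n → ℝ) :=
  convexHull ℝ
    ({x : Fin n → ℝ | (∀ i, |x i| ≤ 1) ∧ x ⟨n - 1, by omega⟩ = 0} ∪
     {Pi.single (⟨n - 1, by omega⟩ : Fin n) (1 : ℝ),
      -Pi.single (⟨n - 1, by omega⟩ : Fin n) (1 : ℝ)})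

/-!
Because `Q_n` is the convex hull of the slice `[-1,1]^{n-1} × {0}` and the apexes `±e_n`, it is
`{x | |x_i| + |x_n| ≤ 1 for all i < n}`. The lattice points of `m Q_n` with last coordinate `t`
therefore form a cube with `(2(m - |t|) + 1)^d` points, `d = n - 1`, so
`L(m) = (2m + 1)^d + 2 ∑_{j<m} (2j + 1)^d`, and Faulhaber's formula gives
`ℓ_1 = 2d + (4 - 2^{d+1}) B_d`. For `d = 4k`, Euler's formula for `ζ(d)` together with
`ζ(d) ≥ 1` gives `-B_d ≥ 2 d! / (2π)^d`, and `d! > π^d` for `d ≥ 7`, whence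
`(2^{d+1} - 4)(-B_d) > 2`, that is `ℓ_1 > 2d + 2 = 2n`.

An interior lattice point survives a dilation by some factor `c > 1`, which forces
`|v_i| + |v_n| < 1`, hence `v = 0`.
-/

open Finset Real

theorem Finset.sum_Icc_neg_natAbs {M : Type*} [AddCommMonoid M] (f : ℕ → M) (m : ℕ) :
    ∑ t ∈ Icc (-(m : ℤ)) m, f t.natAbs = f 0 + 2 • ∑ j ∈ range m, f (j + 1) := by
  induction m with
  | zero => simp
  | succ m ih =>
    have hIcc : Icc (-((m + 1 : ℕ) : ℤ)) (m + 1 : ℕ) =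
        insert (-((m + 1 : ℕ) : ℤ)) (insert ((m + 1 : ℕ) : ℤ) (Icc (-(m : ℤ)) m)) := by
      ext; simp only [mem_Icc, mem_insert]; omega
    rw [hIcc, sum_insert (by simp only [mem_insert, mem_Icc]; omega), sum_insert (by simp), ih,
      sum_range_succ]
    simp only [Int.natAbs_neg, Int.natAbs_natCast, smul_add, two_nsmul]
    abel

theorem Finset.sum_range_two_mul {M : Type*} [AddCommMonoid M] (f : ℕ → M) (n : ℕ) :
    ∑ k ∈ range (2 * n), f k =
      ∑ j ∈ range n, f (2 * j) + ∑ j ∈ range n, f (2 * j + 1) := by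
  induction n with
  | zero => simp
  | succ n ih =>
    rw [Nat.mul_succ, sum_range_succ, sum_range_succ, ih, sum_range_succ, sum_range_succ]
    abel

open Topology in
theorem exists_one_lt_smul_mem_of_mem_interior {E : Type*} [TopologicalSpace E] [MulAction ℝ E]
    [ContinuousSMul ℝ E] {s : Set E} {x : E} (hx : x ∈ interior s) :
    ∃ c : ℝ, 1 < c ∧ c • x ∈ s := by
  have : ∀ᶠ c in 𝓝[>] (1 : ℝ), c • x ∈ s :=
    nhdsWithin_le_nhds <| (continuous_id.smul continuous_const).continuousAt.preimage_mem_nhds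
      (by simpa using mem_interior_iff_mem_nhds.1 hx)
  exact (this.and self_mem_nhdsWithin).exists.imp fun c h => ⟨h.2, h.1⟩

theorem isLatticePolytope_convexHull {n : ℕ} {S : Set (Fin n → ℝ)} (hS : S.Finite)
    (hint : ∀ x ∈ S, ∀ i, ∃ z : ℤ, x i = z) : IsLatticePolytope (convexHull ℝ S) := by
  have hinj : Function.Injective fun (v : Fin n → ℤ) (i : Fin n) => (v i : ℝ) :=
    Int.cast_injective.comp_left
  refine ⟨(hS.preimage hinj.injOn).toFinset, ?_⟩
  rw [Set.Finite.coe_toFinset, Set.image_preimage_eq_of_subset fun x hx => ?_]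
  choose z hz using hint x hx
  exact ⟨z, funext fun i => (hz i).symm⟩

section Bipyramid

variable {ι : Type*} (l : ι)

def bipyramid (r : ℝ) : Set (ι → ℝ) := {x | ∀ i ≠ l, |x i| + |x l| ≤ r}

theorem convex_bipyramid (r : ℝ) : Convex ℝ (bipyramid l r) := by
  intro x hx y hy a b ha hb hab i hi
  have hxy : ∀ j, |(a • x + b • y) j| ≤ a * |x j| + b * |y j| := fun j => by
    simpa [abs_mul, abs_of_nonneg ha, abs_of_nonneg hb] using abs_add_le (a * x j) (b * y j)
  calc |(a • x + b • y) i| + |(a • x + b • y) l|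
      ≤ a * (|x i| + |x l|) + b * (|y i| + |y l|) := by linarith [hxy i, hxy l]
    _ ≤ a * r + b * r := by gcongr <;> [exact hx i hi; exact hy i hi]
    _ = r := by rw [← add_mul, hab, one_mul]

theorem neg_bipyramid (r : ℝ) : -bipyramid l r = bipyramid l r := by
  ext x
  simp [bipyramid]

theorem smul_bipyramid {c : ℝ} (hc : 0 < c) (r : ℝ) :
    c • bipyramid l r = bipyramid l (c * r) := by
  ext x
  simp only [Set.mem_smul_set_iff_inv_smul_mem₀ hc.ne', bipyramid, Set.mem_ofPred_eq,
    Pi.smul_apply, smul_eq_mul, abs_mul, abs_inv, abs_of_pos hc, ← mul_add, inv_mul_le_iff₀ hc]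

theorem abs_add_abs_lt_one_of_smul_mem_bipyramid {c : ℝ} (hc : 1 < c) {x : ι → ℝ}
    (hx : c • x ∈ bipyramid l 1) (i : ι) (hi : i ≠ l) : |x i| + |x l| < 1 := by
  have := hx i hi
  simp only [Pi.smul_apply, smul_eq_mul, abs_mul, abs_of_pos (one_pos.trans hc)] at this
  nlinarith [abs_nonneg (x i), abs_nonneg (x l)]

theorem intCast_mem_bipyramid_iff (v : ι → ℤ) (m : ℕ) :
    (fun i => (v i : ℝ)) ∈ bipyramid l m ↔ ∀ i ≠ l, |v i| + |v l| ≤ m := by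
  simp only [bipyramid, Set.mem_ofPred_eq]
  exact forall₂_congr fun i _ => by exact_mod_cast Iff.rfl

theorem convexHull_slice_union_apexes_eq_bipyramid [DecidableEq ι] [Nontrivial ι] :
    convexHull ℝ
        ({x : ι → ℝ | (∀ i, |x i| ≤ 1) ∧ x l = 0} ∪ {Pi.single l 1, -Pi.single l 1}) =
      bipyramid l 1 := by
  refine (convexHull_min ?_ (convex_bipyramid l 1)).antisymm fun x hx => ?_
  · rintro x (⟨hx, hxl⟩ | rfl | rfl) i hi
    · simp [hxl, hx i]
    all_goals simp [hi]
  obtain ⟨s, hs, hxl⟩ : ∃ s ∈ ({1, -1} : Set ℝ), x l = |x l| * s := by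
    rcases le_total 0 (x l) with h | h
    · exact ⟨1, by simp, by simp [abs_of_nonneg h]⟩
    · exact ⟨-1, by simp, by simp [abs_of_nonpos h]⟩
  set t := |x l|
  have ht : t ≤ 1 := by
    obtain ⟨i, hi⟩ := exists_ne l
    linarith [hx i hi, abs_nonneg (x i)]
  set c : ι → ℝ := fun i => if i = l then 0 else x i / (1 - t)
  have hc : c ∈ {x : ι → ℝ | (∀ i, |x i| ≤ 1) ∧ x l = 0} := by
    refine ⟨fun i => ?_, if_pos rfl⟩
    by_cases hi : i = l
    · simp [c, hi]
    · simpa [c, hi, abs_div, abs_of_nonneg (sub_nonneg.2 ht)] using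
        div_le_one_of_le₀ (by linarith [hx i hi]) (sub_nonneg.2 ht)
  have hs' : Pi.single l s ∈ ({Pi.single l 1, -Pi.single l 1} : Set (ι → ℝ)) := by
    rcases hs with rfl | rfl <;> simp [Pi.single_neg]
  -- for `t = 1` the division by zero makes `c = 0`, and then `x = s • e_l`
  have hxc : x = (1 - t) • c + t • Pi.single l s := by
    ext i
    by_cases hi : i = l
    · subst hi; simp [c, hxl]
    · have : 1 - t = 0 → x i = 0 := fun h => abs_nonpos_iff.1 (by linarith [hx i hi])
      simp [c, hi, mul_div_cancel_of_imp' this]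
  rw [hxc]
  exact convex_convexHull ℝ _ (subset_convexHull ℝ _ (Set.mem_union_left _ hc))
    (subset_convexHull ℝ _ (Set.mem_union_right _ hs')) (sub_nonneg.2 ht) (abs_nonneg _) (by ring)

variable [Fintype ι]

theorem zero_mem_interior_bipyramid : (0 : ι → ℝ) ∈ interior (bipyramid l 1) := by
  refine mem_interior.2 ⟨Metric.ball 0 (1 / 2), fun x hx i _ => ?_, Metric.isOpen_ball,
    Metric.mem_ball_self (by norm_num)⟩
  rw [mem_ball_zero_iff, pi_norm_lt_iff (by norm_num)] at hx
  linarith [(hx i).le, (hx l).le, Real.norm_eq_abs (x i), Real.norm_eq_abs (x l)]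

theorem intPoints_interior_bipyramid [Nontrivial ι] :
    {v : ι → ℤ | (fun i => (v i : ℝ)) ∈ interior (bipyramid l 1)} = {0} := by
  refine Set.eq_singleton_iff_unique_mem.2
    ⟨by simpa [Pi.zero_def] using zero_mem_interior_bipyramid l, fun v hv => ?_⟩
  obtain ⟨c, hc, hcv⟩ := exists_one_lt_smul_mem_of_mem_interior hv
  have hsmall : ∀ i ≠ l, v i = 0 ∧ v l = 0 := fun i hi => by
    have h : |v i| + |v l| < 1 := by
      exact_mod_cast abs_add_abs_lt_one_of_smul_mem_bipyramid l hc hcv i hi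
    constructor <;> exact abs_eq_zero.1 (by linarith [abs_nonneg (v i), abs_nonneg (v l)])
  ext i
  obtain ⟨j, hj⟩ := exists_ne l
  by_cases hi : i = l
  · exact hi ▸ (hsmall j hj).2
  · exact (hsmall i hi).1

variable [DecidableEq ι]

theorem slice_eq_convexHull_pi :
    {x : ι → ℝ | (∀ i, |x i| ≤ 1) ∧ x l = 0} =
      convexHull ℝ (Set.univ.pi fun i => if i = l then {0} else {-1, 1}) := by
  rw [convexHull_pi]
  ext x
  simp only [Set.mem_ofPred_eq, Set.mem_pi, Set.mem_univ, true_implies, apply_ite (convexHull ℝ),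
    convexHull_singleton, convexHull_pair, segment_eq_Icc (by norm_num : (-1 : ℝ) ≤ 1)]
  refine ⟨fun ⟨hx, hxl⟩ i => ?_, fun hx => ⟨fun i => ?_, by simpa using hx l⟩⟩
  · split_ifs with hi
    · exact hi ▸ hxl
    · exact abs_le.1 (hx i)
  · specialize hx i
    split_ifs at hx with hi
    · simp [Set.mem_singleton_iff.1 hx]
    · exact abs_le.2 hx

theorem intPoints_bipyramid_eq_biUnion [Nontrivial ι] (m : ℕ) :
    {v : ι → ℤ | (fun i => (v i : ℝ)) ∈ bipyramid l m} =
      ↑((Icc (-(m : ℤ)) m).biUnion fun t => Fintype.piFinset fun i =>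
        if i = l then {t} else Icc (-((m - t.natAbs : ℕ) : ℤ)) (m - t.natAbs : ℕ)) := by
  ext v
  simp only [Set.mem_ofPred_eq, intCast_mem_bipyramid_iff, coe_biUnion, mem_coe, mem_Icc,
    Fintype.mem_piFinset, Set.mem_iUnion, exists_prop, Int.abs_eq_natAbs]
  constructor
  · intro hv
    obtain ⟨j, hj⟩ := exists_ne l
    have := hv j hj
    refine ⟨v l, ⟨by omega, by omega⟩, fun i => ?_⟩
    split_ifs with hi
    · simp [hi]
    · have := hv i hi
      simp only [mem_Icc]; omega
  · rintro ⟨t, ht, hvt⟩ i hi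
    have hl := hvt l
    have := hvt i
    simp only [hi, if_true, if_false, mem_singleton, mem_Icc] at hl this
    omega

theorem card_piFinset_ite_singleton (t : ℤ) (a : ℕ) :
    #(Fintype.piFinset fun i => if i = l then {t} else Icc (-(a : ℤ)) a) =
      (2 * a + 1) ^ (Fintype.card ι - 1) := by
  simp only [Fintype.card_piFinset, apply_ite card, card_singleton, Int.card_Icc]
  rw [prod_ite, filter_eq', filter_ne', prod_const, prod_const, one_pow, one_mul,
    card_erase_of_mem (mem_univ l), card_univ]
  congr 1
  omega

theorem ncard_intPoints_bipyramid [Nontrivial ι] (m : ℕ) :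
    {v : ι → ℤ | (fun i => (v i : ℝ)) ∈ bipyramid l m}.ncard =
      (2 * m + 1) ^ (Fintype.card ι - 1) +
        2 * ∑ j ∈ range m, (2 * j + 1) ^ (Fintype.card ι - 1) := by
  rw [intPoints_bipyramid_eq_biUnion, Set.ncard_coe_finset, card_biUnion]
  · simp only [card_piFinset_ite_singleton]
    rw [sum_Icc_neg_natAbs (fun a => (2 * (m - a) + 1) ^ (Fintype.card ι - 1)), smul_eq_mul,
      ← sum_range_reflect]
    refine congr_arg _ (congr_arg _ (sum_congr rfl fun j hj => ?_))
    rw [mem_range] at hj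
    congr 2
    omega
  · refine fun s _ t _ hst => disjoint_left.2 fun v hs ht => hst ?_
    have hs := Fintype.mem_piFinset.1 hs l
    have ht := Fintype.mem_piFinset.1 ht l
    simp only [↓reduceIte, Finset.mem_singleton] at hs ht
    exact hs.symm.trans ht

end Bipyramid

noncomputable def powerSumPoly (p : ℕ) : ℚ[X] :=
  C (p + 1 : ℚ)⁻¹ * (Polynomial.bernoulli (p + 1) - C (_root_.bernoulli (p + 1)))

theorem powerSumPoly_eval (p n : ℕ) :
    (powerSumPoly p).eval (n : ℚ) = ∑ k ∈ range n, (k : ℚ) ^ p := by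
  rw [powerSumPoly, eval_mul, eval_C, eval_sub, eval_C, ← sum_range_pow_eq_bernoulli_sub,
    inv_mul_cancel_left₀ (by positivity)]

theorem powerSumPoly_coeff_one {p : ℕ} (hp : p ≠ 0) :
    (powerSumPoly p).coeff 1 = _root_.bernoulli p := by
  rw [powerSumPoly, coeff_C_mul, coeff_sub, coeff_C_of_ne_zero one_ne_zero, sub_zero,
    coeff_bernoulli, if_pos (by omega), Nat.choose_one_right, Nat.add_sub_cancel]
  push_cast
  field_simp

noncomputable def oddPowerSumPoly (p : ℕ) : ℚ[X] :=
  (powerSumPoly p).comp (C 2 * X) - C (2 ^ p) * powerSumPoly p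

theorem oddPowerSumPoly_eval (p n : ℕ) :
    (oddPowerSumPoly p).eval (n : ℚ) = ∑ j ∈ range n, (2 * j + 1 : ℚ) ^ p := by
  have h := sum_range_two_mul (fun k => (k : ℚ) ^ p) n
  rw [oddPowerSumPoly, eval_sub, eval_comp, eval_mul, eval_C, eval_X, eval_mul, eval_C,
    ← Nat.cast_ofNat, ← Nat.cast_mul, powerSumPoly_eval, powerSumPoly_eval, h, mul_sum]
  push_cast
  simp [mul_pow]

theorem oddPowerSumPoly_coeff_one {p : ℕ} (hp : p ≠ 0) :
    (oddPowerSumPoly p).coeff 1 = (2 - 2 ^ p) * _root_.bernoulli p := by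
  rw [oddPowerSumPoly, coeff_sub, comp_C_mul_X_coeff, coeff_C_mul, powerSumPoly_coeff_one hp]
  ring

noncomputable def bipyramidEhrhartPoly (d : ℕ) : ℚ[X] :=
  ((X + 1) ^ d).comp (C 2 * X) + 2 * oddPowerSumPoly d

theorem bipyramidEhrhartPoly_eval (d m : ℕ) :
    (bipyramidEhrhartPoly d).eval (m : ℚ) =
      ((2 * m + 1) ^ d + 2 * ∑ j ∈ range m, (2 * j + 1) ^ d : ℕ) := by
  simp only [bipyramidEhrhartPoly, eval_add, eval_comp, eval_mul, eval_ofNat, oddPowerSumPoly_eval,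
    eval_pow, eval_X, eval_C, eval_one]
  push_cast
  ring

theorem bipyramidEhrhartPoly_coeff_one {d : ℕ} (hd : d ≠ 0) :
    (bipyramidEhrhartPoly d).coeff 1 = 2 * d + (4 - 2 ^ (d + 1)) * _root_.bernoulli d := by
  rw [bipyramidEhrhartPoly, coeff_add, comp_C_mul_X_coeff, coeff_X_add_one_pow,
    coeff_ofNat_mul, oddPowerSumPoly_coeff_one hd, Nat.choose_one_right]
  ring

theorem two_mul_factorial_div_le_neg_one_pow_mul_bernoulli {k : ℕ} (hk : k ≠ 0) :
    2 * ((2 * k).factorial : ℝ) / (2 * π) ^ (2 * k) ≤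
      (-1) ^ (k + 1) * (_root_.bernoulli (2 * k) : ℝ) := by
  have h := le_hasSum (hasSum_zeta_nat hk) 1 fun j _ => by positivity
  have h2 : (2 : ℝ) ^ (2 * k - 1) = 2 ^ (2 * k) / 2 := by
    rw [pow_sub₀ _ two_ne_zero (by omega), pow_one, div_eq_mul_inv]
  rw [Nat.cast_one, one_pow, div_one, h2, le_div_iff₀ (by positivity)] at h
  rw [div_le_iff₀ (by positivity), mul_pow]
  linarith

theorem pi_pow_lt_factorial {d : ℕ} (hd : 7 ≤ d) : π ^ d < d.factorial := by
  induction d, hd using Nat.le_induction with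
  | base =>
    calc π ^ 7 < 3.15 ^ 7 := by gcongr; exact pi_lt_d2
      _ < (Nat.factorial 7 : ℝ) := by norm_num [Nat.factorial]
  | succ d hd ih =>
    rw [pow_succ, Nat.factorial_succ, Nat.cast_mul, mul_comm ((d + 1 : ℕ) : ℝ)]
    have : π < ((d + 1 : ℕ) : ℝ) := by
      have : (7 : ℝ) ≤ d := by exact_mod_cast hd
      push_cast; linarith [pi_lt_four]
    gcongr

theorem bernoulli_eight : _root_.bernoulli 8 = -1 / 30 := by
  have h5 : bernoulli' 5 = 0 := by
    rw [bernoulli'_def]; norm_num [sum_range_succ, Nat.choose]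
  have h6 : bernoulli' 6 = 1 / 42 := by
    rw [bernoulli'_def]; norm_num [sum_range_succ, Nat.choose, h5]
  have h7 : bernoulli' 7 = 0 := by
    rw [bernoulli'_def]; norm_num [sum_range_succ, Nat.choose, h5, h6]
  rw [bernoulli_eq_bernoulli'_of_ne_one (by decide), bernoulli'_def]
  norm_num [sum_range_succ, Nat.choose, h5, h6, h7]

theorem two_lt_mul_neg_bernoulli_four_mul {k : ℕ} (hk : 2 ≤ k) :
    2 < ((2 : ℝ) ^ (4 * k + 1) - 4) * -(_root_.bernoulli (4 * k) : ℝ) := by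
  set d := 4 * k
  have hB : 2 * (d.factorial : ℝ) / (2 * π) ^ d ≤ -(_root_.bernoulli d : ℝ) := by
    have h := two_mul_factorial_div_le_neg_one_pow_mul_bernoulli (k := 2 * k) (by omega)
    rwa [← mul_assoc, show 2 * 2 * k = d by omega, Odd.neg_one_pow ⟨k, rfl⟩, neg_one_mul] at h
  have hpow : (2 : ℝ) ^ d ≤ 2 ^ (d + 1) - 4 := by
    have : (4 : ℝ) ≤ 2 ^ d := by
      calc (4 : ℝ) = 2 ^ 2 := by norm_num
        _ ≤ 2 ^ d := pow_le_pow_right₀ one_le_two (by omega)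
    rw [pow_succ]; linarith
  calc (2 : ℝ) = 2 ^ d * (2 * π ^ d / (2 * π) ^ d) := by
        rw [mul_pow]; field_simp
    _ < 2 ^ d * (2 * d.factorial / (2 * π) ^ d) := by
        gcongr; exact pi_pow_lt_factorial (by omega)
    _ ≤ (2 ^ (d + 1) - 4) * -(_root_.bernoulli d : ℝ) :=
        mul_le_mul hpow hB (by positivity) ((by positivity : (0 : ℝ) ≤ 2 ^ d).trans hpow)

theorem two_mul_lt_coeff_one_bipyramidEhrhartPoly {k : ℕ} (hk : 2 ≤ k) :
    2 * (4 * k + 1 : ℚ) < (bipyramidEhrhartPoly (4 * k)).coeff 1 := by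
  rw [bipyramidEhrhartPoly_coeff_one (by omega)]
  have h : (2 : ℚ) < (2 ^ (4 * k + 1) - 4) * -_root_.bernoulli (4 * k) := by
    exact_mod_cast two_lt_mul_neg_bernoulli_four_mul hk
  push_cast
  linarith

section
variable (n : ℕ) (hn : 2 ≤ n)

theorem bipyramidQ_eq_bipyramid : bipyramidQ n hn = bipyramid (⟨n - 1, by omega⟩ : Fin n) 1 :=
  have := Fin.nontrivial_iff_two_le.2 hn
  convexHull_slice_union_apexes_eq_bipyramid _

theorem neg_bipyramidQ : -bipyramidQ n hn = bipyramidQ n hn := by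
  rw [bipyramidQ_eq_bipyramid, neg_bipyramid]

theorem intPoints_interior_bipyramidQ :
    {v : Fin n → ℤ | (fun i => (v i : ℝ)) ∈ interior (bipyramidQ n hn)} = {0} :=
  have := Fin.nontrivial_iff_two_le.2 hn
  bipyramidQ_eq_bipyramid n hn ▸ intPoints_interior_bipyramid _

theorem isLatticePolytope_bipyramidQ : IsLatticePolytope (bipyramidQ n hn) := by
  rw [bipyramidQ, slice_eq_convexHull_pi, convexHull_convexHull_union_left]
  refine isLatticePolytope_convexHull ((Set.Finite.pi fun i => ?_).union (Set.toFinite _)) ?_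
  · split_ifs <;> simp
  rintro x (hx | rfl | rfl) i
  · specialize hx i (Set.mem_univ i)
    dsimp only at hx
    split_ifs at hx
    · exact ⟨0, by simpa using hx⟩
    · rcases hx with h | h <;> rw [h]
      exacts [⟨-1, by simp⟩, ⟨1, by simp⟩]
  · rw [Pi.single_apply]
    split_ifs
    exacts [⟨1, by simp⟩, ⟨0, by simp⟩]
  · rw [Pi.neg_apply, Pi.single_apply]
    split_ifs
    exacts [⟨-1, by simp⟩, ⟨0, by simp⟩]

theorem isEhrhartPoly_bipyramidQ :
    IsEhrhartPoly (bipyramidQ n hn) ((bipyramidEhrhartPoly (n - 1)).map (algebraMap ℚ ℝ)) := by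
  have := Fin.nontrivial_iff_two_le.2 hn
  intro m hm
  rw [bipyramidQ_eq_bipyramid, smul_bipyramid _ (Nat.cast_pos.2 hm), mul_one, latticePointCount,
    ncard_intPoints_bipyramid, Fintype.card_fin, eval_map, eval₂_at_natCast,
    bipyramidEhrhartPoly_eval, map_natCast]

end

theorem bipyramid_counterexample_to_Wills (k : ℕ) (hk : 2 ≤ k) :
    bipyramidQ (4 * k + 1) (by omega) = -(bipyramidQ (4 * k + 1) (by omega)) ∧
    IsLatticePolytope (bipyramidQ (4 * k + 1) (by omega)) ∧
    {v : Fin (4 * k + 1) → ℤ |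
      (fun i => (v i : ℝ)) ∈ interior (bipyramidQ (4 * k + 1) (by omega))} = {0} ∧
    ∃ L : Polynomial ℝ, IsEhrhartPoly (bipyramidQ (4 * k + 1) (by omega)) L ∧
      2 * ((4 * k + 1 : ℕ) : ℝ) < L.coeff 1 ∧ (k = 2 → L.coeff 1 = 494 / 15) := by
  have hcoeff : ((bipyramidEhrhartPoly (4 * k)).map (algebraMap ℚ ℝ)).coeff 1 =
      (bipyramidEhrhartPoly (4 * k)).coeff 1 := by
    rw [coeff_map, eq_ratCast]
  refine ⟨(neg_bipyramidQ _ _).symm, isLatticePolytope_bipyramidQ _ _,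
    intPoints_interior_bipyramidQ _ _, (bipyramidEhrhartPoly (4 * k)).map (algebraMap ℚ ℝ),
    isEhrhartPoly_bipyramidQ (4 * k + 1) (by omega), ?_,
    fun hk2 => ?_⟩
  · rw [hcoeff]
    exact_mod_cast two_mul_lt_coeff_one_bipyramidEhrhartPoly hk
  · subst hk2
    rw [hcoeff, bipyramidEhrhartPoly_coeff_one (by norm_num), bernoulli_eight]
    norm_num
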